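/- Let b ∈ ℝ⁷ with rank M(b) = 3. Then the seven polynomials q₁,…,q₇ are linearly independent in the real vector space of polynomials ℝ[z₁,z₂,z₃]: if α ∈ ℝ⁷ satisfies α₁q₁ + α₂q₂ + α₃q₃ + α₄q₄ + α₅q₅ + α₆q₆ + α₇q₇ = 0 as a polynomial, then α = 0. -/
import Mathlib


/-- The 3×4 camera matrix `M(b)` with rows `(1, b₁, b₂, b₃)`, `(b₄, b₅, b₆, b₇)`,
`(0, 0, 0, 1)`. -/
def Mcam (b : Fin 7 → ℝ) : Matrix (Fin 3) (Fin 4) ℝ :=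
  !![1, b 0, b 1, b 2; b 3, b 4, b 5, b 6; 0, 0, 0, 1]

/-- `v(b) = (b₂b₅ − b₁b₆, b₆ − b₂b₄, b₁b₄ − b₅)`, the direction of the baseline. -/
def vbase (b : Fin 7 → ℝ) : Fin 3 → ℝ :=
  ![b 1 * b 4 - b 0 * b 5, b 5 - b 1 * b 3, b 0 * b 3 - b 4]

open MvPolynomial in
/-- `q₁ = b₄z₁z₂ + b₅z₂² + b₆z₂z₃`. -/
noncomputable def q₁ (b : Fin 7 → ℝ) : MvPolynomial (Fin 3) ℝ :=
  C (b 3) * X 0 * X 1 + C (b 4) * X 1 ^ 2 + C (b 5) * X 1 * X 2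

open MvPolynomial in
/-- `q₂ = b₄z₁z₃ + b₅z₂z₃ + b₆z₃²`. -/
noncomputable def q₂ (b : Fin 7 → ℝ) : MvPolynomial (Fin 3) ℝ :=
  C (b 3) * X 0 * X 2 + C (b 4) * X 1 * X 2 + C (b 5) * X 2 ^ 2

open MvPolynomial in
/-- `q₃ = b₄z₁ + b₅z₂ + b₆z₃`. -/
noncomputable def q₃ (b : Fin 7 → ℝ) : MvPolynomial (Fin 3) ℝ :=
  C (b 3) * X 0 + C (b 4) * X 1 + C (b 5) * X 2

open MvPolynomial in
/-- `q₄ = z₁² + b₁z₁z₂ + b₂z₁z₃`. -/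
noncomputable def q₄ (b : Fin 7 → ℝ) : MvPolynomial (Fin 3) ℝ :=
  X 0 ^ 2 + C (b 0) * X 0 * X 1 + C (b 1) * X 0 * X 2

open MvPolynomial in
/-- `q₅ = z₁z₂ + b₁z₂² + b₂z₂z₃`. -/
noncomputable def q₅ (b : Fin 7 → ℝ) : MvPolynomial (Fin 3) ℝ :=
  X 0 * X 1 + C (b 0) * X 1 ^ 2 + C (b 1) * X 1 * X 2

open MvPolynomial in
/-- `q₆ = z₁z₃ + b₁z₂z₃ + b₂z₃²`. -/
noncomputable def q₆ (b : Fin 7 → ℝ) : MvPolynomial (Fin 3) ℝ :=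
  X 0 * X 2 + C (b 0) * X 1 * X 2 + C (b 1) * X 2 ^ 2

open MvPolynomial in
/-- `q₇ = z₁ + b₁z₂ + b₂z₃`. -/
noncomputable def q₇ (b : Fin 7 → ℝ) : MvPolynomial (Fin 3) ℝ :=
  X 0 + C (b 0) * X 1 + C (b 1) * X 2


open Matrix in
private lemma rank_cond (b : Fin 7 → ℝ) (hrank : (Mcam b).rank = 3)
    (hu : b 4 = b 3 * b 0) (hw : b 5 = b 3 * b 1) : False := by
  set x : Fin 3 → ℝ := ![b 3, -1, b 6 - b 2 * b 3] with hx
  have hker : (Mcam b)ᵀ.mulVecLin x = 0 := by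
    funext j
    fin_cases j <;>
      simp [Mcam, Matrix.mulVecLin, Matrix.mulVec, dotProduct,
        Fin.sum_univ_succ, hx, hu, hw] <;> ring
  have hrt : (Mcam b)ᵀ.rank = 3 := by rw [Matrix.rank_transpose]; exact hrank
  have hrn := LinearMap.finrank_range_add_finrank_ker (Mcam b)ᵀ.mulVecLin
  rw [Module.finrank_fin_fun] at hrn
  rw [Matrix.rank] at hrt
  have hk : Module.finrank ℝ (LinearMap.ker (Mcam b)ᵀ.mulVecLin) = 0 := by omega
  have hbot : LinearMap.ker (Mcam b)ᵀ.mulVecLin = ⊥ := Submodule.finrank_eq_zero.mp hk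
  have hx0 : x = 0 := by
    have := hbot ▸ (LinearMap.mem_ker.mpr hker)
    simpa using this
  have : x 1 = 0 := by rw [hx0]; rfl
  simp [hx] at this

set_option maxHeartbeats 4000000 in
/-- If `rank M(b) = 3`, the seven polynomials `q₁, …, q₇` are linearly independent in
`ℝ[z₁,z₂,z₃]`: any vanishing linear combination has all coefficients zero. -/
theorem baseline_polynomials_linearIndependent
    (b : Fin 7 → ℝ) (hrank : (Mcam b).rank = 3) (α : Fin 7 → ℝ)
    (h : α 0 • q₁ b + α 1 • q₂ b + α 2 • q₃ b + α 3 • q₄ b +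
         α 4 • q₅ b + α 5 • q₆ b + α 6 • q₇ b = 0) :
    α = 0 := by
  classical
  -- coefficient extraction
  have e1 := congrArg (MvPolynomial.coeff (Finsupp.single 0 2)) h
  have e2 := congrArg (MvPolynomial.coeff (Finsupp.single 0 1 + Finsupp.single 1 1)) h
  have e3 := congrArg (MvPolynomial.coeff (Finsupp.single 0 1 + Finsupp.single 2 1)) h
  have e4 := congrArg (MvPolynomial.coeff (Finsupp.single 1 2)) h
  have e5 := congrArg (MvPolynomial.coeff (Finsupp.single 1 1 + Finsupp.single 2 1)) h
  have e6 := congrArg (MvPolynomial.coeff (Finsupp.single 2 2)) h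
  have e7 := congrArg (MvPolynomial.coeff (Finsupp.single 0 1)) h
  have e8 := congrArg (MvPolynomial.coeff (Finsupp.single 1 1)) h
  have e9 := congrArg (MvPolynomial.coeff (Finsupp.single 2 1)) h
  simp [q₁, q₂, q₃, q₄, q₅, q₆, q₇, MvPolynomial.coeff_add, MvPolynomial.coeff_smul,
    MvPolynomial.coeff_C_mul, MvPolynomial.X, mul_assoc, MvPolynomial.monomial_mul,
    MvPolynomial.monomial_pow, MvPolynomial.coeff_monomial, Finsupp.ext_iff,
    Fin.forall_fin_succ, Finsupp.add_apply, Finsupp.single_apply] at e1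
  simp [q₁, q₂, q₃, q₄, q₅, q₆, q₇, MvPolynomial.coeff_add, MvPolynomial.coeff_smul,
    MvPolynomial.coeff_C_mul, MvPolynomial.X, mul_assoc, MvPolynomial.monomial_mul,
    MvPolynomial.monomial_pow, MvPolynomial.coeff_monomial, Finsupp.ext_iff,
    Fin.forall_fin_succ, Finsupp.add_apply, Finsupp.single_apply] at e2
  simp [q₁, q₂, q₃, q₄, q₅, q₆, q₇, MvPolynomial.coeff_add, MvPolynomial.coeff_smul,
    MvPolynomial.coeff_C_mul, MvPolynomial.X, mul_assoc, MvPolynomial.monomial_mul,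
    MvPolynomial.monomial_pow, MvPolynomial.coeff_monomial, Finsupp.ext_iff,
    Fin.forall_fin_succ, Finsupp.add_apply, Finsupp.single_apply] at e3
  simp [q₁, q₂, q₃, q₄, q₅, q₆, q₇, MvPolynomial.coeff_add, MvPolynomial.coeff_smul,
    MvPolynomial.coeff_C_mul, MvPolynomial.X, mul_assoc, MvPolynomial.monomial_mul,
    MvPolynomial.monomial_pow, MvPolynomial.coeff_monomial, Finsupp.ext_iff,
    Fin.forall_fin_succ, Finsupp.add_apply, Finsupp.single_apply] at e4
  simp [q₁, q₂, q₃, q₄, q₅, q₆, q₇, MvPolynomial.coeff_add, MvPolynomial.coeff_smul,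
    MvPolynomial.coeff_C_mul, MvPolynomial.X, mul_assoc, MvPolynomial.monomial_mul,
    MvPolynomial.monomial_pow, MvPolynomial.coeff_monomial, Finsupp.ext_iff,
    Fin.forall_fin_succ, Finsupp.add_apply, Finsupp.single_apply] at e5
  simp [q₁, q₂, q₃, q₄, q₅, q₆, q₇, MvPolynomial.coeff_add, MvPolynomial.coeff_smul,
    MvPolynomial.coeff_C_mul, MvPolynomial.X, mul_assoc, MvPolynomial.monomial_mul,
    MvPolynomial.monomial_pow, MvPolynomial.coeff_monomial, Finsupp.ext_iff,
    Fin.forall_fin_succ, Finsupp.add_apply, Finsupp.single_apply] at e6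
  simp [q₁, q₂, q₃, q₄, q₅, q₆, q₇, MvPolynomial.coeff_add, MvPolynomial.coeff_smul,
    MvPolynomial.coeff_C_mul, MvPolynomial.X, mul_assoc, MvPolynomial.monomial_mul,
    MvPolynomial.monomial_pow, MvPolynomial.coeff_monomial, Finsupp.ext_iff,
    Fin.forall_fin_succ, Finsupp.add_apply, Finsupp.single_apply] at e7
  simp [q₁, q₂, q₃, q₄, q₅, q₆, q₇, MvPolynomial.coeff_add, MvPolynomial.coeff_smul,
    MvPolynomial.coeff_C_mul, MvPolynomial.X, mul_assoc, MvPolynomial.monomial_mul,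
    MvPolynomial.monomial_pow, MvPolynomial.coeff_monomial, Finsupp.ext_iff,
    Fin.forall_fin_succ, Finsupp.add_apply, Finsupp.single_apply] at e8
  simp [q₁, q₂, q₃, q₄, q₅, q₆, q₇, MvPolynomial.coeff_add, MvPolynomial.coeff_smul,
    MvPolynomial.coeff_C_mul, MvPolynomial.X, mul_assoc, MvPolynomial.monomial_mul,
    MvPolynomial.monomial_pow, MvPolynomial.coeff_monomial, Finsupp.ext_iff,
    Fin.forall_fin_succ, Finsupp.add_apply, Finsupp.single_apply] at e9
  -- rank condition
  have hcase : b 4 - b 3 * b 0 ≠ 0 ∨ b 5 - b 3 * b 1 ≠ 0 := by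
    by_contra hc
    push_neg at hc
    exact rank_cond b hrank (by linarith [hc.1]) (by linarith [hc.2])
  have hα3 : α 3 = 0 := by linarith [e1]
  have hu0 : α 0 * (b 4 - b 3 * b 0) = 0 := by linear_combination e4 - b 0 * e2 + b 0 ^ 2 * hα3
  have hw0 : α 1 * (b 5 - b 3 * b 1) = 0 := by linear_combination e6 - b 1 * e3 + b 1 ^ 2 * hα3
  have hmix : α 0 * (b 5 - b 3 * b 1) + α 1 * (b 4 - b 3 * b 0) = 0 := by
    linear_combination e5 - b 1 * e2 - b 0 * e3 + 2 * b 0 * b 1 * hα3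
  have h2u : α 2 * (b 4 - b 3 * b 0) = 0 := by linear_combination e8 - b 0 * e7
  have h2w : α 2 * (b 5 - b 3 * b 1) = 0 := by linear_combination e9 - b 1 * e7
  have h01 : α 0 = 0 ∧ α 1 = 0 ∧ α 2 = 0 := by
    rcases hcase with hu | hw
    · have h0 : α 0 = 0 := (mul_eq_zero.mp hu0).resolve_right hu
      have h2 : α 2 = 0 := (mul_eq_zero.mp h2u).resolve_right hu
      have h1m : α 1 * (b 4 - b 3 * b 0) = 0 := by
        linear_combination hmix - (b 5 - b 3 * b 1) * h0
      exact ⟨h0, (mul_eq_zero.mp h1m).resolve_right hu, h2⟩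
    · have h1 : α 1 = 0 := (mul_eq_zero.mp hw0).resolve_right hw
      have h2 : α 2 = 0 := (mul_eq_zero.mp h2w).resolve_right hw
      have h0m : α 0 * (b 5 - b 3 * b 1) = 0 := by
        linear_combination hmix - (b 4 - b 3 * b 0) * h1
      exact ⟨(mul_eq_zero.mp h0m).resolve_right hw, h1, h2⟩
  obtain ⟨hα0, hα1, hα2⟩ := h01
  have hα4 : α 4 = 0 := by linear_combination e2 - b 3 * hα0 - b 0 * hα3
  have hα5 : α 5 = 0 := by linear_combination e3 - b 3 * hα1 - b 1 * hα3
  have hα6 : α 6 = 0 := by linear_combination e7 - b 3 * hα2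
  funext i
  fin_cases i <;> simp only [Pi.zero_apply] <;>
    first | exact hα0 | exact hα1 | exact hα2 | exact hα3 | exact hα4 | exact hα5 | exact hα6
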